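/- arXiv:2604.16570 — 2 statements merged into one kernel-verified Lean document; each statement's English description precedes it below -/
import Mathlib

section
/- Let k ≥ 1 and m ≥ k, and define e(i) = k - min(k, max(0, k - i) + max(0, k - (m - i) - 1)) for i = 1, ..., m. Then the sum ∑_{i=1}^{m} e(i) equals (m - k + 1) · k. -/
/-- Number of undetermined nucleotides of the `i`-th of `m` consecutive masked
overlapping `k`-mer tokens (1-indexed), using truncated subtraction so that
`k - i = max(0, k - i)` etc. -/
def maskExponent (k m i : ℕ) : ℕ := k - min k ((k - i) + (k - (m - i) - 1))

lemma gauss_ioc (n : ℕ) : 2 * ∑ i ∈ Finset.Ioc 0 n, i = n * (n + 1) := by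
  induction n with
  | zero => simp
  | succ n ih =>
    rw [Finset.sum_Ioc_succ_top (Nat.zero_le _)]
    calc 2 * ((∑ i ∈ Finset.Ioc 0 n, i) + (n + 1))
        = 2 * ∑ i ∈ Finset.Ioc 0 n, i + 2 * (n + 1) := by ring
      _ = n * (n + 1) + 2 * (n + 1) := by rw [ih]
      _ = (n + 1) * (n + 1 + 1) := by ring

theorem stmt_1 (k m : ℕ) (hk : 1 ≤ k) (hm : k ≤ m) :
    ∑ i ∈ Finset.Icc 1 m, maskExponent k m i = (m - k + 1) * k := by
  set c := min k (m - k + 1) with hc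
  have hc1 : 1 ≤ c := by omega
  have hc2 : 2 * c ≤ m + 1 := by omega
  have hstep : ∀ i ∈ Finset.Icc 1 m,
      maskExponent k m i = min i (min (m + 1 - i) c) := by
    intro i hi
    simp only [Finset.mem_Icc] at hi
    simp only [maskExponent, hc]
    omega
  rw [Finset.sum_congr rfl hstep]
  have hIcc : Finset.Icc 1 m = Finset.Ioc 0 m := by
    rw [← Finset.Icc_add_one_left_eq_Ioc]; rfl
  rw [hIcc]
  rw [← Finset.sum_Ioc_consecutive _ (show (0:ℕ) ≤ m + 1 - c by omega)
        (show m + 1 - c ≤ m by omega)]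
  rw [← Finset.sum_Ioc_consecutive _ (show (0:ℕ) ≤ c - 1 by omega)
        (show c - 1 ≤ m + 1 - c by omega)]
  have h1 : ∑ i ∈ Finset.Ioc 0 (c - 1), min i (min (m + 1 - i) c)
      = ∑ i ∈ Finset.Ioc 0 (c - 1), i := by
    refine Finset.sum_congr rfl fun i hi => ?_
    simp only [Finset.mem_Ioc] at hi
    omega
  have h2 : ∑ i ∈ Finset.Ioc (c - 1) (m + 1 - c), min i (min (m + 1 - i) c)
      = c * (m + 1 - c - (c - 1)) := by
    rw [Finset.sum_congr rfl (fun i hi => ?_), Finset.sum_const, Nat.card_Ioc,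
      smul_eq_mul, Nat.mul_comm]
    simp only [Finset.mem_Ioc] at hi
    omega
  have h3 : ∑ i ∈ Finset.Ioc (m + 1 - c) m, min i (min (m + 1 - i) c)
      = ∑ i ∈ Finset.Ioc 0 (c - 1), i := by
    refine Finset.sum_nbij' (fun i => m + 1 - i) (fun j => m + 1 - j)
      ?_ ?_ ?_ ?_ ?_
    · intro a ha; simp only [Finset.mem_Ioc] at *; omega
    · intro a ha; simp only [Finset.mem_Ioc] at *; omega
    · intro a ha; simp only [Finset.mem_Ioc] at *; omega
    · intro a ha; simp only [Finset.mem_Ioc] at *; omega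
    · intro a ha
      simp only [Finset.mem_Ioc] at ha
      show a ⊓ ((m + 1 - a) ⊓ c) = m + 1 - a
      omega
  rw [h1, h2, h3]
  have hg := gauss_ioc (c - 1)
  have key : 2 * ((∑ i ∈ Finset.Ioc 0 (c - 1), i) + c * (m + 1 - c - (c - 1))
      + ∑ i ∈ Finset.Ioc 0 (c - 1), i) = 2 * ((m - k + 1) * k) := by
    rcases le_total k (m - k + 1) with h | h
    · -- c = k
      obtain ⟨d, hd⟩ : ∃ d, m = 2 * k - 1 + d := ⟨m + 1 - 2 * k, by omega⟩
      obtain ⟨e, he⟩ : ∃ e, k = e + 1 := ⟨k - 1, by omega⟩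
      have e1 : c = e + 1 := by omega
      have e2 : m + 1 - c - (c - 1) = d + 1 := by omega
      have e3 : c - 1 = e := by omega
      have e4 : (c - 1) + 1 = e + 1 := by omega
      have e5 : m - k + 1 = e + 1 + d := by omega
      rw [e2, e5, he, e3, e1]
      rw [e3] at hg
      calc 2 * ((∑ i ∈ Finset.Ioc 0 e, i) + (e + 1) * (d + 1)
            + ∑ i ∈ Finset.Ioc 0 e, i)
          = 2 * (2 * ∑ i ∈ Finset.Ioc 0 e, i) + 2 * ((e + 1) * (d + 1)) := by
            ring
        _ = 2 * (e * (e + 1)) + 2 * ((e + 1) * (d + 1)) := by rw [hg]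
        _ = 2 * ((e + 1 + d) * (e + 1)) := by ring
    · -- c = m - k + 1
      obtain ⟨a, ha⟩ : ∃ a, m = k + a := ⟨m - k, by omega⟩
      obtain ⟨b, hb⟩ : ∃ b, k = a + b := ⟨k - a, by omega⟩
      have e1 : c = a + 1 := by omega
      have e2 : m + 1 - c - (c - 1) = b := by omega
      have e3 : c - 1 = a := by omega
      have e4 : (c - 1) + 1 = a + 1 := by omega
      have e5 : m - k + 1 = a + 1 := by omega
      rw [e2, e5, hb, e3, e1]
      rw [e3] at hg
      calc 2 * ((∑ i ∈ Finset.Ioc 0 a, i) + (a + 1) * b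
            + ∑ i ∈ Finset.Ioc 0 a, i)
          = 2 * (2 * ∑ i ∈ Finset.Ioc 0 a, i) + 2 * ((a + 1) * b) := by ring
        _ = 2 * (a * (a + 1)) + 2 * ((a + 1) * b) := by rw [hg]
        _ = 2 * ((a + 1) * (a + b)) := by ring
  set S := ∑ i ∈ Finset.Ioc 0 (c - 1), i
  generalize hM : c * (m + 1 - c - (c - 1)) = M at key
  generalize hP : (m - k + 1) * k = P at key ⊢
  omega
end

section
/- With e(i) = k - min(k, max(0, k-i) + max(0, k-(m-i)-1)) and the effective candidate space size |V^(i)| = 4^{e(i)}, the leakage ratio r = 1 - (∑_{i=1}^m e(i) · log 4)/(m · k · log 4) satisfies: r = 1 if m ≤ k - 1, and r = (k - 1)/m if m ≥ k, for all natural numbers k ≥ 1 and m ≥ 1. -/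
/-- Leakage ratio: `1` minus the quotient of the maximum entropy with leakage,
`∑ i, e i * log 4`, by the maximum entropy without leakage, `m * k * log 4`. -/
noncomputable def leakageRatio (k m : ℕ) : ℝ :=
  1 - (∑ i ∈ Finset.Icc 1 m, (maskExponent k m i : ℝ) * Real.log 4) /
        ((m : ℝ) * (k : ℝ) * Real.log 4)

/-!
When `m < k` every masked token overlaps an unmasked flank on both sides, which together pin
down all `k` of its nucleotides. When `k ≤ m`, `e(i)` is the number of windows `[p, p + k)`,
`1 ≤ p ≤ m + 1 - k`, lying inside the mask and containing position `i`; each of these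
`m + 1 - k` windows contains `k` positions, so double counting gives `∑ e(i) = k (m + 1 - k)`
and `r = 1 - (m + 1 - k) / m = (k - 1) / m`.
-/

open Finset

lemma maskExponent_eq_zero {k m i : ℕ} (hmk : m < k) (hi : i ≤ m) : maskExponent k m i = 0 := by
  unfold maskExponent
  omega

lemma maskExponent_eq_card_windows {k m i : ℕ} (hkm : k ≤ m) (hi : i ∈ Icc 1 m) :
    maskExponent k m i = #{p ∈ Icc 1 (m + 1 - k) | p ≤ i ∧ i < p + k} := by
  have hwin : {p ∈ Icc 1 (m + 1 - k) | p ≤ i ∧ i < p + k} =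
      Icc (max 1 (i + 1 - k)) (min (m + 1 - k) i) := by
    ext p
    simp only [mem_filter, mem_Icc, max_le_iff, le_min_iff]
    omega
  rw [mem_Icc] at hi
  rw [hwin, Nat.card_Icc, maskExponent]
  omega

lemma card_window {k m p : ℕ} (hp : p ∈ Icc 1 (m + 1 - k)) :
    #{i ∈ Icc 1 m | p ≤ i ∧ i < p + k} = k := by
  have hwin : {i ∈ Icc 1 m | p ≤ i ∧ i < p + k} = Ico p (p + k) := by
    rw [mem_Icc] at hp
    ext i
    simp only [mem_filter, mem_Icc, mem_Ico]
    omega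
  rw [hwin, Nat.card_Ico, Nat.add_sub_cancel_left]

lemma sum_maskExponent {k m : ℕ} (hkm : k ≤ m) :
    ∑ i ∈ Icc 1 m, maskExponent k m i = k * (m + 1 - k) := by
  calc ∑ i ∈ Icc 1 m, maskExponent k m i
      = ∑ i ∈ Icc 1 m, #{p ∈ Icc 1 (m + 1 - k) | p ≤ i ∧ i < p + k} :=
        sum_congr rfl fun i hi => maskExponent_eq_card_windows hkm hi
    _ = ∑ p ∈ Icc 1 (m + 1 - k), #{i ∈ Icc 1 m | p ≤ i ∧ i < p + k} :=
        sum_card_bipartiteAbove_eq_sum_card_bipartiteBelow _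
    _ = ∑ _p ∈ Icc 1 (m + 1 - k), k := sum_congr rfl fun p hp => card_window hp
    _ = k * (m + 1 - k) := by rw [sum_const, Nat.card_Icc, smul_eq_mul, Nat.add_sub_cancel,
        mul_comm]

lemma leakageRatio_eq_one_sub_sum_div (k m : ℕ) :
    leakageRatio k m = 1 - ((∑ i ∈ Icc 1 m, maskExponent k m i : ℕ) : ℝ) / (m * k) := by
  have hlog : Real.log 4 ≠ 0 := (Real.log_pos (by norm_num)).ne'
  rw [leakageRatio, ← sum_mul, mul_div_mul_right _ _ hlog, Nat.cast_sum]

theorem stmt_2_general (k m : ℕ) (hk : 1 ≤ k) :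
    (m ≤ k - 1 → leakageRatio k m = 1) ∧
    (k ≤ m → leakageRatio k m = ((k : ℝ) - 1) / (m : ℝ)) := by
  rw [leakageRatio_eq_one_sub_sum_div]
  constructor
  · intro hmk
    rw [sum_eq_zero fun i hi => maskExponent_eq_zero (by omega) (mem_Icc.mp hi).2]
    simp
  · intro hkm
    have hm : (m : ℝ) ≠ 0 := by norm_cast; omega
    rw [sum_maskExponent hkm, Nat.cast_mul, Nat.cast_sub (by omega)]
    push_cast
    field_simp
    ring

theorem stmt_2 (k m : ℕ) (hk : 1 ≤ k) (hm : 1 ≤ m) :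
    (m ≤ k - 1 → leakageRatio k m = 1) ∧
    (k ≤ m → leakageRatio k m = ((k : ℝ) - 1) / (m : ℝ)) :=
  stmt_2_general k m hk
end
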